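/- arXiv:1409.8003 — 2 statements merged into one kernel-verified Lean document; each statement's English description precedes it below -/
import Mathlib

section
/- In the Iwahori–Hecke algebra of a Coxeter group, the map sending vⁿT_w to v⁻ⁿ(T_{w⁻¹})⁻¹ extends to a well-defined ring involution of the Hecke algebra (an additive involutive ring homomorphism that is semilinear over the ring involution v ↦ v⁻¹ of ℤ[v,v⁻¹]). -/
/-!
Write `D w = (T_{w⁻¹})⁻¹`. The bar map is necessarily the `invert`-semilinear map with
`T_w ↦ D_w`. Inverting the relations of the `T_w` shows that the `D_w` are again multiplicative
along length-additive products and that `(D_s + 1)(D_s - v⁻²) = 0`. Hence `T_s T_w` and `D_s D_w`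
expand by the same formula, with `v²` replaced by `v⁻²`, which gives `bar (T_s y) = D_s bar y`;
induction on the length of `w` upgrades this to `bar (T_w y) = D_w bar y`, i.e. `bar` is
multiplicative. Multiplicativity then gives `bar D_w = (bar T_{w⁻¹})⁻¹ = T_w`, so `bar` is an
involution.
-/

open LaurentPolynomial

namespace Module.Basis

variable {ι R S M M' : Type*} [Semiring R] [Semiring S] [AddCommMonoid M] [Module R M]
  [AddCommMonoid M'] [Module S M']

noncomputable def constrₛₗ (b : Basis ι R M) (σ : R →+* S) (f : ι → M') : M →ₛₗ[σ] M' where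
  toFun x := (b.repr x).sum fun i a => σ a • f i
  map_add' x y := by
    rw [map_add]
    exact Finsupp.sum_add_index' (by simp) (by simp [add_smul])
  map_smul' a x := by
    rw [map_smul, Finsupp.sum_smul_index' (by simp), Finsupp.smul_sum]
    simp [mul_smul]

@[simp]
theorem constrₛₗ_basis (b : Basis ι R M) (σ : R →+* S) (f : ι → M') (i : ι) :
    b.constrₛₗ σ f (b i) = f i := by
  simp [constrₛₗ]

theorem involutive_of_apply_apply {σ : R →+* R} (hσ : Function.Involutive σ) (b : Basis ι R M)
    (f : M →ₛₗ[σ] M) (hf : ∀ i, f (f (b i)) = b i) : Function.Involutive f := by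
  intro x
  induction b.mem_span x using Submodule.span_induction with
  | mem _ hx => obtain ⟨i, rfl⟩ := hx; exact hf i
  | zero => simp
  | add x y _ _ hx hy => rw [map_add, map_add, hx, hy]
  | smul a x _ hx => rw [map_smulₛₗ, map_smulₛₗ, hσ, hx]

end Module.Basis

theorem mul_mul_eq_of_add_one_mul_sub_eq_zero {H : Type*} [Ring H] {x c : H} (hxc : Commute x c)
    (h : (x + 1) * (x - c) = 0) (y : H) : x * (x * y) = c * (x * y) - x * y + c * y := by
  have hsq : x * x = c * x - x + c := by
    rw [← sub_eq_zero, ← h, add_mul, mul_sub, hxc.eq]; noncomm_ring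
  rw [← mul_assoc, hsq, add_mul, sub_mul, mul_assoc]

theorem Ring.inverse_add_one_mul_sub_eq_zero {A H : Type*} [CommRing A] [Ring H] [Algebra A H]
    {t : H} (ht : IsUnit t) {c c' : A} (hc : c * c' = 1)
    (h : (t + 1) * (t - algebraMap A H c) = 0) :
    (Ring.inverse t + 1) * (Ring.inverse t - algebraMap A H c') = 0 := by
  set d := Ring.inverse t
  have hdt : d * t = 1 := Ring.inverse_mul_cancel t ht
  have htd : t * d = 1 := Ring.mul_inverse_cancel t ht
  -- `d (t + 1) = d + 1` and `(t - c) d = 1 - c d = -c (d - c')`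
  calc (d + 1) * (d - algebraMap A H c')
      = -algebraMap A H c' * ((d * (t + 1)) * ((t - algebraMap A H c) * d)) := by
        rw [mul_add, hdt, mul_one, sub_mul, htd, Algebra.commutes]
        simp only [Algebra.algebraMap_eq_smul_one, mul_smul_comm, smul_mul_assoc, one_mul,
          mul_one, mul_sub, mul_add, add_mul, neg_mul, smul_add, smul_neg, smul_smul, hc,
          one_smul]
        abel
    _ = 0 := by rw [mul_assoc d, ← mul_assoc (t + 1), h]; simp

namespace CoxeterSystem

variable {B W : Type*} [Group W] {M : CoxeterMatrix B} (cs : CoxeterSystem M W)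

theorem length_induction_left {p : W → Prop} (w : W) (one : p 1)
    (mul : ∀ (i : B) (w : W), cs.length (cs.simple i * w) = cs.length w + 1 → p w →
      p (cs.simple i * w)) : p w := by
  induction hn : cs.length w using Nat.strong_induction_on generalizing w with
  | _ n ih =>
  rcases eq_or_ne w 1 with rfl | hw
  · exact one
  obtain ⟨i, hi⟩ := cs.exists_leftDescent_of_ne_one hw
  have hw' : cs.simple i * (cs.simple i * w) = w := cs.simple_mul_simple_cancel_left i
  rw [← hw']
  refine mul i _ ?_ (ih _ (hn ▸ hi) _ rfl)
  have := cs.length_simple_mul w i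
  rw [hw']
  unfold IsLeftDescent at hi
  omega

variable {H : Type*} [Ring H]

def IsLengthMultiplicative (t : W → H) : Prop :=
  ∀ w w' : W, cs.length (w * w') = cs.length w + cs.length w' → t w * t w' = t (w * w')

namespace IsLengthMultiplicative

variable {cs} {t : W → H} (ht : cs.IsLengthMultiplicative t)
include ht

theorem map_one (h1 : IsUnit (t 1)) : t 1 = 1 := by
  have h := ht 1 1 (by simp)
  rw [mul_one] at h
  exact h1.mul_eq_left.mp h

theorem inverse_inv (hu : ∀ w, IsUnit (t w)) :
    cs.IsLengthMultiplicative fun w => Ring.inverse (t w⁻¹) := by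
  intro w w' h
  have h' : cs.length (w'⁻¹ * w⁻¹) = cs.length w'⁻¹ + cs.length w⁻¹ := by
    rw [← mul_inv_rev, cs.length_inv, cs.length_inv, cs.length_inv, h, add_comm]
  dsimp only
  rw [← Ring.inverse_mul (Or.inl (hu _)), ht _ _ h', mul_inv_rev]

theorem map_simple_mul_of_length_lt {c : H} (i : B) (hc : Commute (t (cs.simple i)) c)
    (hq : (t (cs.simple i) + 1) * (t (cs.simple i) - c) = 0) {w : W}
    (hw : cs.length (cs.simple i * w) + 1 = cs.length w) :
    t (cs.simple i) * t w = c * t w - t w + c * t (cs.simple i * w) := by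
  have hsw : t (cs.simple i) * t (cs.simple i * w) = t w := by
    rw [ht _ _ (by rw [cs.length_simple, cs.simple_mul_simple_cancel_left]; omega),
      cs.simple_mul_simple_cancel_left]
  rw [← hsw, mul_mul_eq_of_add_one_mul_sub_eq_zero hc hq]

end IsLengthMultiplicative

end CoxeterSystem

section HeckeBar

variable {B W : Type*} [Group W] {M : CoxeterMatrix B} (cs : CoxeterSystem M W)
  {R H : Type*} [CommRing R] [Ring H] [Algebra R[T;T⁻¹] H] (b : Module.Basis W R[T;T⁻¹] H)

noncomputable def heckeBar : H →ₛₗ[(invert : R[T;T⁻¹] ≃ₐ[R] R[T;T⁻¹]).toRingHom] H :=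
  b.constrₛₗ _ fun w => Ring.inverse (b w⁻¹)

theorem heckeBar_basis (w : W) : heckeBar b (b w) = Ring.inverse (b w⁻¹) :=
  b.constrₛₗ_basis _ _ w

theorem heckeBar_algebraMap_T_mul (n : ℤ) (x : H) :
    heckeBar b (algebraMap R[T;T⁻¹] H (T n) * x) =
      algebraMap R[T;T⁻¹] H (T (-n)) * heckeBar b x := by
  rw [← Algebra.smul_def, map_smulₛₗ]
  simp [Algebra.smul_def]

variable {b} (hmul : cs.IsLengthMultiplicative b) (hunit : ∀ w, IsUnit (b w))
include hmul hunit

theorem heckeBar_one : heckeBar b 1 = 1 := by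
  rw [← hmul.map_one (hunit 1), heckeBar_basis, inv_one, hmul.map_one (hunit 1), Ring.inverse_one]

variable (hquad : ∀ i : B,
  (b (cs.simple i) + 1) * (b (cs.simple i) - algebraMap R[T;T⁻¹] H (T 2)) = 0)
include hquad

theorem heckeBar_simple_mul_basis (i : B) (w : W) :
    heckeBar b (b (cs.simple i) * b w) = heckeBar b (b (cs.simple i)) * heckeBar b (b w) := by
  have hbar := hmul.inverse_inv hunit
  rw [heckeBar_basis, heckeBar_basis]
  rcases cs.length_simple_mul w i with hw | hw
  · have hw' : cs.length (cs.simple i * w) = cs.length (cs.simple i) + cs.length w := by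
      rw [hw, cs.length_simple, add_comm]
    rw [hmul _ _ hw', heckeBar_basis, hbar _ _ hw']
  · have hquad' : (Ring.inverse (b (cs.simple i)⁻¹) + 1) *
        (Ring.inverse (b (cs.simple i)⁻¹) - algebraMap R[T;T⁻¹] H (T (-2))) = 0 := by
      rw [cs.inv_simple]
      exact Ring.inverse_add_one_mul_sub_eq_zero (hunit _) (by rw [← T_add]; rfl) (hquad i)
    rw [hmul.map_simple_mul_of_length_lt i (Algebra.commute_algebraMap_right _ _) (hquad i) hw,
      hbar.map_simple_mul_of_length_lt i (Algebra.commute_algebraMap_right _ _) hquad' hw,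
      map_add, map_sub, heckeBar_algebraMap_T_mul, heckeBar_algebraMap_T_mul, heckeBar_basis,
      heckeBar_basis]

theorem heckeBar_simple_mul (i : B) (y : H) :
    heckeBar b (b (cs.simple i) * y) = heckeBar b (b (cs.simple i)) * heckeBar b y := by
  have h : (heckeBar b).comp (LinearMap.mulLeft R[T;T⁻¹] (b (cs.simple i))) =
      (LinearMap.mulLeft R[T;T⁻¹] (heckeBar b (b (cs.simple i)))).comp (heckeBar b) :=
    b.ext (heckeBar_simple_mul_basis cs hmul hunit hquad i)
  exact LinearMap.congr_fun h y

theorem heckeBar_basis_mul (w : W) (y : H) :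
    heckeBar b (b w * y) = heckeBar b (b w) * heckeBar b y := by
  induction w using cs.length_induction_left generalizing y with
  | one => rw [hmul.map_one (hunit 1), heckeBar_one cs hmul hunit, one_mul, one_mul]
  | mul i w hw ih =>
    have hw' : cs.length (cs.simple i * w) = cs.length (cs.simple i) + cs.length w := by
      rw [hw, cs.length_simple, add_comm]
    rw [← hmul _ _ hw', mul_assoc, heckeBar_simple_mul cs hmul hunit hquad, ih,
      heckeBar_simple_mul cs hmul hunit hquad, mul_assoc]

theorem heckeBar_mul (x y : H) : heckeBar b (x * y) = heckeBar b x * heckeBar b y := by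
  have h : (heckeBar b).comp (LinearMap.mulRight R[T;T⁻¹] y) =
      (LinearMap.mulRight R[T;T⁻¹] (heckeBar b y)).comp (heckeBar b) :=
    b.ext fun w => heckeBar_basis_mul cs hmul hunit hquad w y
  exact LinearMap.congr_fun h x

theorem heckeBar_heckeBar (x : H) : heckeBar b (heckeBar b x) = x := by
  refine b.involutive_of_apply_apply involutive_invert (heckeBar b) (fun w => ?_) x
  have h : heckeBar b (heckeBar b (b w)) * heckeBar b (b w⁻¹) = 1 := by
    rw [← heckeBar_mul cs hmul hunit hquad, heckeBar_basis, Ring.inverse_mul_cancel _ (hunit _),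
      heckeBar_one cs hmul hunit]
  rw [heckeBar_basis b w⁻¹, inv_inv] at h
  calc heckeBar b (heckeBar b (b w))
      = heckeBar b (heckeBar b (b w)) * Ring.inverse (b w) * b w :=
        (Ring.inverse_mul_cancel_right _ _ (hunit w)).symm
    _ = b w := by rw [h, one_mul]

end HeckeBar

/-- In the Iwahori–Hecke algebra of a Coxeter group, the map sending `vⁿT_w` to
`v⁻ⁿ(T_{w⁻¹})⁻¹` extends to a well-defined ring involution of the Hecke algebra:
an additive, multiplicative, involutive map which is semilinear over the ring involution
`v ↦ v⁻¹` of `ℤ[v,v⁻¹]`. -/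
theorem hecke_bar_involution_exists
    (B W : Type) [Group W] (M : CoxeterMatrix B) (cs : CoxeterSystem M W)
    (H : Type) [Ring H] [Algebra (LaurentPolynomial ℤ) H]
    (Tb : W → H) (bT : Module.Basis W (LaurentPolynomial ℤ) H) (hbT : ∀ w, bT w = Tb w)
    (hmul : ∀ w w' : W, cs.length (w * w') = cs.length w + cs.length w' →
      Tb w * Tb w' = Tb (w * w'))
    (hquad : ∀ i : B,
      (Tb (cs.simple i) + 1) * (Tb (cs.simple i) - algebraMap (LaurentPolynomial ℤ) H (T 2)) = 0)
    (hunit : ∀ w : W, IsUnit (Tb w)) :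
    ∃ bar : H → H,
      (∀ x y : H, bar (x + y) = bar x + bar y) ∧
      (∀ x y : H, bar (x * y) = bar x * bar y) ∧
      bar 1 = 1 ∧
      (∀ x : H, bar (bar x) = x) ∧
      (∀ (n : ℤ) (w : W),
        bar (algebraMap (LaurentPolynomial ℤ) H (T n) * Tb w) =
          algebraMap (LaurentPolynomial ℤ) H (T (-n)) * Ring.inverse (Tb w⁻¹)) := by
  obtain rfl : Tb = bT := funext fun w => (hbT w).symm
  refine ⟨heckeBar bT, map_add _, heckeBar_mul cs hmul hunit hquad, heckeBar_one cs hmul hunit,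
    heckeBar_heckeBar cs hmul hunit hquad, fun n w => ?_⟩
  rw [heckeBar_algebraMap_T_mul, heckeBar_basis]
end

section
/- For G = GL_n over an algebraically closed field K, given two complete flags V₀ ⊂ V₁ ⊂ … ⊂ V_n and V'₀ ⊂ V'₁ ⊂ … ⊂ V'_n in K^n, there exists a unique permutation w of {1,…,n} such that there is a basis {v₁,…,v_n} of K^n with {v₁,…,v_i} a basis of V_i and {v_{w(1)},…,v_{w(i)}} a basis of V'_i for all i. -/
/-!
In a basis adapted to both flags the permutation can be read off the flags: for a linearly
independent family `v` and `i ∉ B`, `span (v '' A) ⊓ span (v '' insert i B) ≤ span (v '' B)`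
holds iff `i ∉ A`, so `w j < k ↔ ¬ V k ⊓ V' (j + 1) ≤ V' j`. This gives uniqueness.

For existence, choose for each `t` the first `j t` with `¬ V (t + 1) ⊓ V' (j t + 1) ≤ V t` and a
vector `x t` witnessing it. The modular law makes `j` injective, hence a permutation, and any
family with `x t ∈ V (t + 1) \ V t` spans the flag `V` step by step by counting dimensions; the
same applies to `V'` and `x ∘ j⁻¹`.
-/

open Submodule Module

theorem Fin.exists_castSucc_and_not_succ {n : ℕ} {P : Fin (n + 1) → Prop} (h0 : P 0)
    {i : Fin (n + 1)} (hi : ¬ P i) : ∃ j : Fin n, P j.castSucc ∧ ¬ P j.succ := by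
  induction i using Fin.induction with
  | zero => exact absurd h0 hi
  | succ j ih => by_cases hj : P j.castSucc; exacts [⟨j, hj, hi⟩, ih hj]

theorem Fin.setOf_val_lt_succ {n : ℕ} (t : Fin n) :
    {s : Fin n | (s : ℕ) < (t : ℕ) + 1} = insert t {s : Fin n | (s : ℕ) < t} := by
  ext s
  simp only [Set.mem_ofPred_eq, Set.mem_insert_iff, Fin.ext_iff]
  omega

theorem Set.range_subtype_eq_image {α β : Type*} (f : α → β) (p : α → Prop) :
    (Set.range fun a : {a // p a} => f a) = f '' {a | p a} :=
  (Set.image_eq_range f _).symm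

section Flag

variable (K : Type*) {M : Type*} [DivisionRing K] [AddCommGroup M] [Module K M] {n : ℕ}

def spanFlag (v : Fin n → M) (i : Fin (n + 1)) : Submodule K M :=
  span K (v '' {t | (t : ℕ) < i})

variable {K} {V V' : Fin (n + 1) → Submodule K M}

theorem LinearIndependent.span_image_inf_span_image_insert_le_iff {ι : Type*} {v : ι → M}
    (hv : LinearIndependent K v) {A B : Set ι} {i : ι} (hiB : i ∉ B) :
    span K (v '' A) ⊓ span K (v '' insert i B) ≤ span K (v '' B) ↔ i ∉ A := by
  rw [Set.image_insert_eq, span_insert]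
  refine ⟨fun h hiA => hv.notMem_span_image hiB (h ⟨subset_span (Set.mem_image_of_mem v hiA),
    mem_sup_left (mem_span_singleton_self _)⟩), fun hiA => ?_⟩
  have hdisj : Disjoint (span K (v '' (A ∪ B))) (span K {v i}) := by
    simpa using hv.disjoint_span_image (s := A ∪ B) (t := {i}) (by simp [hiA, hiB])
  calc span K (v '' A) ⊓ (span K {v i} ⊔ span K (v '' B))
      ≤ span K (v '' (A ∪ B)) ⊓ (span K {v i} ⊔ span K (v '' B)) :=
        inf_le_inf_right _ (span_mono (Set.image_mono Set.subset_union_left))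
    _ = span K (v '' (A ∪ B)) ⊓ span K {v i} ⊔ span K (v '' B) :=
        (inf_sup_assoc_of_le _ (span_mono (Set.image_mono Set.subset_union_right))).symm
    _ = span K (v '' B) := by rw [hdisj.eq_bot, bot_sup_eq]

theorem val_lt_iff_not_spanFlag_inf_le {w : Equiv.Perm (Fin n)} {v : Fin n → M}
    (hv : LinearIndependent K v) (j : Fin n) (k : Fin (n + 1)) :
    (w j : ℕ) < k ↔
      ¬ spanFlag K v k ⊓ spanFlag K (v ∘ w) j.succ ≤ spanFlag K (v ∘ w) j.castSucc := by
  have hj : w j ∉ w '' {s : Fin n | (s : ℕ) < j} := by simp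
  rw [spanFlag, spanFlag, spanFlag, Set.image_comp, Set.image_comp, Fin.val_succ,
    Fin.val_castSucc, Fin.setOf_val_lt_succ, Set.image_insert_eq,
    hv.span_image_inf_span_image_insert_le_iff hj, not_not]
  rfl

theorem perm_eq_of_spanFlag_eq {w w' : Equiv.Perm (Fin n)} {v v' : Fin n → M}
    (hv : LinearIndependent K v) (hv' : LinearIndependent K v')
    (hV : spanFlag K v = spanFlag K v') (hV' : spanFlag K (v ∘ w) = spanFlag K (v' ∘ w')) :
    w = w' :=
  Equiv.ext fun j => eq_of_forall_gt_iff fun c => by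
    have h := val_lt_iff_not_spanFlag_inf_le (w := w) hv j c.castSucc
    rw [hV, hV', ← val_lt_iff_not_spanFlag_inf_le hv' j c.castSucc] at h
    exact h

theorem exists_inf_castSucc_le_and_not_inf_succ_le (h0 : V' 0 = ⊥) (hlast : V' (Fin.last n) = ⊤)
    {A B : Submodule K M} (hBA : ¬ B ≤ A) :
    ∃ j : Fin n, B ⊓ V' j.castSucc ≤ A ∧ ∃ x ∈ B ⊓ V' j.succ, x ∉ A := by
  obtain ⟨j, hj, hj'⟩ := Fin.exists_castSucc_and_not_succ (P := fun k => B ⊓ V' k ≤ A)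
    (by simp [h0]) (i := Fin.last n) (by simpa [hlast] using hBA)
  exact ⟨j, hj, SetLike.not_le_iff_exists.mp hj'⟩

variable [FiniteDimensional K M]

theorem flag_eq_bot (hdim : ∀ i, finrank K (V i) = i) : V 0 = ⊥ := by
  simpa using hdim 0

theorem flag_last_eq_top (hdim : ∀ i, finrank K (V i) = i) (hM : finrank K M = n) :
    V (Fin.last n) = ⊤ :=
  eq_top_of_finrank_eq (by rw [hdim, Fin.val_last, hM])

theorem flag_succ_not_le (hdim : ∀ i, finrank K (V i) = i) (t : Fin n) :
    ¬ V t.succ ≤ V t.castSucc := fun hle => by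
  simpa [hdim] using finrank_mono hle

theorem flag_castSucc_sup_span_singleton (hV : Monotone V) (hdim : ∀ i, finrank K (V i) = i)
    (t : Fin n) {x : M} (hx : x ∈ V t.succ) (hx' : x ∉ V t.castSucc) :
    V t.castSucc ⊔ span K {x} = V t.succ :=
  eq_of_le_of_finrank_le (sup_le (hV t.castSucc_le_succ) ((span_singleton_le_iff_mem _ _).mpr hx))
    (by rw [finrank_sup_span_singleton hx', hdim, hdim]; simp)

theorem eq_spanFlag_of_mem_of_notMem (hV : Monotone V) (hdim : ∀ i, finrank K (V i) = i)
    {x : Fin n → M} (hx : ∀ t, x t ∈ V t.succ) (hx' : ∀ t, x t ∉ V t.castSucc) :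
    V = spanFlag K x := by
  funext i
  induction i using Fin.induction with
  | zero => simpa [spanFlag] using flag_eq_bot hdim
  | succ t ih =>
    rw [spanFlag, Fin.val_succ, Fin.setOf_val_lt_succ, Set.image_insert_eq, span_insert,
      sup_comm, ← Fin.val_castSucc, ← spanFlag, ← ih,
      flag_castSucc_sup_span_singleton hV hdim t (hx t) (hx' t)]

theorem linearIndependent_of_mem_flag_of_notMem (hV : Monotone V)
    (hdim : ∀ i, finrank K (V i) = i) {x : Fin n → M} (hx : ∀ t, x t ∈ V t.succ)
    (hx' : ∀ t, x t ∉ V t.castSucc) : LinearIndependent K x := by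
  have hspan : V (Fin.last n) = span K (Set.range x) := by
    rw [eq_spanFlag_of_mem_of_notMem hV hdim hx hx', spanFlag, ← Set.image_univ]
    congr
    ext t
    simp
  rw [linearIndependent_iff_card_eq_finrank_span, Set.finrank, ← hspan, hdim, Fintype.card_fin,
    Fin.val_last]

theorem injective_of_mem_inf_flag_succ (hV : Monotone V) (hV' : Monotone V')
    (hdim' : ∀ i, finrank K (V' i) = i) {j : Fin n → Fin n} {x : Fin n → M}
    (hx : ∀ t, x t ∈ V t.succ ⊓ V' (j t).succ) (hx' : ∀ t, x t ∉ V t.castSucc)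
    (hmin : ∀ t, V t.succ ⊓ V' (j t).castSucc ≤ V t.castSucc) : Function.Injective j := by
  refine Function.Injective.of_lt_imp_ne fun t s hts hjts => hx' s ?_
  have hxt : x t ∉ V' (j t).castSucc := fun h => hx' t (hmin t ⟨(hx t).1, h⟩)
  have hxt_le : span K {x t} ≤ V s.castSucc :=
    (span_singleton_le_iff_mem _ _).mpr (hV (Fin.succ_le_castSucc_iff.mpr hts) (hx t).1)
  have hsplit := flag_castSucc_sup_span_singleton hV' hdim' (j t) (hx t).2 hxt
  rw [hjts] at hsplit
  have hle : V s.succ ⊓ V' (j s).succ ≤ V s.castSucc :=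
    calc V s.succ ⊓ V' (j s).succ = V s.succ ⊓ (V' (j s).castSucc ⊔ span K {x t}) := by
          rw [hsplit]
      _ = V s.succ ⊓ V' (j s).castSucc ⊔ span K {x t} :=
        (inf_sup_assoc_of_le _ (hxt_le.trans (hV s.castSucc_le_succ))).symm
      _ ≤ V s.castSucc := sup_le (hmin s) hxt_le
  exact hle (hx s)

theorem exists_perm_eq_spanFlag (hV : Monotone V) (hV' : Monotone V')
    (hdim : ∀ i, finrank K (V i) = i) (hdim' : ∀ i, finrank K (V' i) = i) (hM : finrank K M = n) :
    ∃ (w : Equiv.Perm (Fin n)) (v : Fin n → M),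
      LinearIndependent K v ∧ V = spanFlag K v ∧ V' = spanFlag K (v ∘ w) := by
  -- `j t` is the first step at which `V'` meets `V t.succ` outside `V t.castSucc`
  choose j hmin x hx hx' using fun t => exists_inf_castSucc_le_and_not_inf_succ_le
    (flag_eq_bot hdim') (flag_last_eq_top hdim' hM) (flag_succ_not_le hdim t)
  let σ := Equiv.ofBijective j <| Finite.injective_iff_bijective.mp <|
    injective_of_mem_inf_flag_succ hV hV' hdim' hx hx' hmin
  have hjσ (s : Fin n) : j (σ.symm s) = s := Equiv.ofBijective_apply_symm_apply _ _ s
  have hxσ (s : Fin n) : x (σ.symm s) ∈ V' s.succ := by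
    simpa only [hjσ] using (mem_inf.mp (hx (σ.symm s))).2
  have hxσ' (s : Fin n) : x (σ.symm s) ∉ V' s.castSucc := fun h =>
    hx' _ (hmin _ ⟨(hx _).1, by rwa [hjσ]⟩)
  exact ⟨σ.symm, x, linearIndependent_of_mem_flag_of_notMem hV hdim (fun t => (hx t).1) hx',
    eq_spanFlag_of_mem_of_notMem hV hdim (fun t => (hx t).1) hx',
    eq_spanFlag_of_mem_of_notMem hV' hdim' hxσ hxσ'⟩

end Flag

/-- Given two complete flags `V₀ ⊂ V₁ ⊂ … ⊂ V_n` and `V'₀ ⊂ V'₁ ⊂ … ⊂ V'_n` in `K^n`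
(`dim V_i = dim V'_i = i`), there exists a unique permutation `w` of `{1,…,n}` (here indexed
by `Fin n`) such that there is a basis `v₁,…,v_n` of `K^n` with `{v₁,…,v_i}` a basis of `V_i`
and `{v_{w(1)},…,v_{w(i)}}` a basis of `V'_i` for all `i`. -/
theorem relative_position_of_flags
    (K : Type) [Field K] (n : ℕ)
    (V V' : Fin (n + 1) → Submodule K (Fin n → K))
    (hmono : ∀ i j : Fin (n + 1), i ≤ j → V i ≤ V j)
    (hmono' : ∀ i j : Fin (n + 1), i ≤ j → V' i ≤ V' j)
    (hdim : ∀ i : Fin (n + 1), Module.finrank K (V i) = i)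
    (hdim' : ∀ i : Fin (n + 1), Module.finrank K (V' i) = i) :
    ∃! w : Equiv.Perm (Fin n),
      ∃ v : Fin n → (Fin n → K),
        LinearIndependent K v ∧
        (∀ i : Fin (n + 1),
          V i = span K (Set.range fun j : {j : Fin n // (j : ℕ) < (i : ℕ)} => v j)) ∧
        (∀ i : Fin (n + 1),
          V' i = span K (Set.range fun j : {j : Fin n // (j : ℕ) < (i : ℕ)} => v (w j))) := by
  have hspanFlag (v : Fin n → Fin n → K) (i : Fin (n + 1)) :
      span K (Set.range fun j : {j : Fin n // (j : ℕ) < (i : ℕ)} => v j) = spanFlag K v i :=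
    congrArg (span K) (Set.range_subtype_eq_image v _)
  obtain ⟨w, v, hv, hVv, hV'v⟩ := exists_perm_eq_spanFlag hmono hmono' hdim hdim' (by simp)
  refine ⟨w, ⟨v, hv, fun i => (congrFun hVv i).trans (hspanFlag v i).symm,
    fun i => (congrFun hV'v i).trans (hspanFlag (v ∘ w) i).symm⟩, ?_⟩
  rintro w' ⟨v', hv', hVv', hV'v'⟩
  refine perm_eq_of_spanFlag_eq hv' hv (funext fun i => ?_) (funext fun i => ?_)
  · exact (hspanFlag v' i).symm.trans ((hVv' i).symm.trans (congrFun hVv i))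
  · exact (hspanFlag (v' ∘ w') i).symm.trans ((hV'v' i).symm.trans (congrFun hV'v i))
end
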